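/- arXiv:math/0411515 — 3 statements merged into one kernel-verified Lean document; each statement's English description precedes it below -/
import Mathlib

section
/- The series Σ_{k=0}^{∞} k · catalan(k) / 2^{2k+1} diverges, i.e. the function k ↦ k · catalan(k)/2^{2k+1} is not summable; hence the prior expected model dimension E[N] = Σ_k k·a_k is infinite. -/
lemma catalan_term_lower (n : ℕ) (hn : 0 < n) :
    (1 : ℝ) / (4 * (n + 1)) ≤ (n : ℝ) * (catalan n : ℝ) / 2 ^ (2 * n + 1) := by
  have key : (4 : ℕ) ^ n ≤ 2 * n * Nat.centralBinom n :=
    Nat.four_pow_le_two_mul_self_mul_centralBinom n hn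
  have hc : (n + 1) * catalan n = Nat.centralBinom n := succ_mul_catalan_eq_centralBinom n
  have key2 : (4 : ℕ) ^ n ≤ 2 * n * ((n + 1) * catalan n) := by rw [hc]; exact key
  have key3 : (4 : ℝ) ^ n ≤ 2 * n * ((n + 1) * catalan n) := by exact_mod_cast key2
  have h2 : (2 : ℝ) ^ (2 * n + 1) = 2 * 4 ^ n := by
    rw [pow_succ, pow_mul]; ring
  rw [h2, div_le_div_iff₀ (by positivity) (by positivity)]
  calc (1 : ℝ) * (2 * 4 ^ n) = 2 * 4 ^ n := by ring
    _ ≤ 2 * (2 * n * ((n + 1) * catalan n)) := by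
        have := mul_le_mul_of_nonneg_left key3 (by norm_num : (0:ℝ) ≤ 2)
        linarith
    _ = (n : ℝ) * (catalan n : ℝ) * (4 * (n + 1)) := by ring

/-- The series `∑_k k * catalan k / 2^(2k+1)` diverges: the prior expected
model dimension is infinite. -/
theorem catalan_seq_expectation_not_summable :
    ¬ Summable (fun k : ℕ => (k : ℝ) * (catalan k : ℝ) / 2 ^ (2 * k + 1)) := by
  intro h
  have h1 := (summable_nat_add_iff 1).2 h
  have h2 : Summable (fun k : ℕ => (1 : ℝ) / (4 * ((k : ℝ) + 1 + 1))) := by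
    refine h1.of_nonneg_of_le (fun k => by positivity) (fun k => ?_)
    have := catalan_term_lower (k + 1) k.succ_pos
    calc (1 : ℝ) / (4 * ((k : ℝ) + 1 + 1)) = 1 / (4 * (((k + 1 : ℕ) : ℝ) + 1)) := by
          push_cast; ring_nf
      _ ≤ _ := this
  have h3 : Summable (fun k : ℕ => (1 : ℝ) / ((k : ℝ) + 1 + 1)) := by
    have := h2.mul_left 4
    refine this.congr fun k => ?_
    field_simp
  have h4 : Summable (fun k : ℕ => (1 : ℝ) / (((k + 2 : ℕ)) : ℝ)) :=
    h3.congr fun k => by push_cast; ring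
  exact Real.not_summable_one_div_natCast ((summable_nat_add_iff 2).1 h4)
end

section
/- If f : [0,1] → ℝ is continuous, f(0) = 0, and f(x) = (1/2)(x + f(x)^2) for all x ∈ [0,1], then f(x) = 1 - √(1-x) for all x ∈ [0,1]. -/
/-- If `f` is continuous on `[0,1]`, `f 0 = 0`, and `f x = (1/2)(x + f x ^ 2)`
on `[0,1]`, then `f x = 1 - √(1-x)` on `[0,1]`. -/
theorem generating_function_equation_solution
    (f : ℝ → ℝ) (hf : ContinuousOn f (Set.Icc 0 1)) (h0 : f 0 = 0)
    (heq : ∀ x ∈ Set.Icc (0 : ℝ) 1, f x = (1 / 2) * (x + (f x) ^ 2)) :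
    ∀ x ∈ Set.Icc (0 : ℝ) 1, f x = 1 - Real.sqrt (1 - x) := by
  have key : ∀ x ∈ Set.Icc (0 : ℝ) 1, (1 - f x) ^ 2 = 1 - x := by
    intro x hx
    have := heq x hx
    nlinarith
  have hle : ∀ x ∈ Set.Icc (0 : ℝ) 1, f x ≤ 1 := by
    by_contra h
    push_neg at h
    obtain ⟨x₀, hx₀, hgt⟩ := h
    have hx₀1 : x₀ < 1 := by
      rcases lt_or_eq_of_le hx₀.2 with h1 | h1
      · exact h1
      · have := key x₀ hx₀
        rw [h1] at this
        nlinarith [hgt, h1 ▸ hgt]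
    have hsub : Set.Icc (0 : ℝ) x₀ ⊆ Set.Icc 0 1 := Set.Icc_subset_Icc le_rfl hx₀.2
    have := intermediate_value_Icc hx₀.1 (hf.mono hsub)
    have h1mem : (1 : ℝ) ∈ Set.Icc (f 0) (f x₀) := by
      rw [h0]; constructor <;> linarith
    obtain ⟨c, hc, hfc⟩ := this h1mem
    have hkc := key c (hsub hc)
    rw [hfc] at hkc
    have : c = 1 := by nlinarith
    linarith [hc.2]
  intro x hx
  have h1 : Real.sqrt (1 - x) = 1 - f x := by
    rw [← key x hx]
    exact Real.sqrt_sq (by linarith [hle x hx])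
  linarith
end

section
/- Define b : ℕ × ℕ → ℝ by b(0,k) = 1 if k = 0 and 0 otherwise; b(m+1, 0) = 1/2; and b(m+1, k+1) = (1/2) Σ_{i=0}^{k} b(m,i) · b(m,k-i). Then for all m, k with m > k, b(m,k) = catalan(k)/2^{2k+1}. In particular the height-m truncated dimension distribution stabilizes, and the limit m → ∞ exists. -/
/-- The height-`m` truncated dimension distribution `b m k` (with `b 0 k = δ_{k0}`,
`b (m+1) 0 = 1/2`, `b (m+1) (k+1) = (1/2) ∑_{i≤k} b m i * b m (k-i)`) stabilizes:
for `m > k` it equals `catalan k / 2^(2k+1)`, so the limit `m → ∞` exists. -/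
theorem truncated_dimension_distribution_stabilizes
    (b : ℕ → ℕ → ℝ)
    (h0 : ∀ k, b 0 k = if k = 0 then 1 else 0)
    (h1 : ∀ m, b (m + 1) 0 = 1 / 2)
    (h2 : ∀ m k, b (m + 1) (k + 1) =
      (1 / 2) * ∑ i ∈ Finset.range (k + 1), b m i * b m (k - i)) :
    ∀ m k : ℕ, k < m → b m k = (catalan k : ℝ) / 2 ^ (2 * k + 1) := by
  intro m k
  induction k using Nat.strong_induction_on generalizing m with
  | _ k ih =>
    intro hk
    obtain ⟨m, rfl⟩ : ∃ m', m = m' + 1 := ⟨m - 1, by omega⟩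
    match k with
    | 0 => simpa [catalan_zero] using h1 m
    | j + 1 =>
      rw [h2]
      have hsum : ∑ i ∈ Finset.range (j + 1), b m i * b m (j - i)
          = ∑ i ∈ Finset.range (j + 1),
            ((catalan i : ℝ) * catalan (j - i)) / 2 ^ (2 * j + 2) := by
        refine Finset.sum_congr rfl fun i hi => ?_
        have hij : i ≤ j := by simpa [Nat.lt_succ_iff] using hi
        rw [ih i (by omega) m (by omega), ih (j - i) (by omega) m (by omega)]
        rw [div_mul_div_comm, ← pow_add]
        congr 2
        omega
      have hc : (catalan (j + 1) : ℝ)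
          = ∑ i ∈ Finset.range (j + 1), (catalan i : ℝ) * catalan (j - i) := by
        rw [catalan_succ' j,
          Finset.Nat.sum_antidiagonal_eq_sum_range_succ (fun x y => catalan x * catalan y) j]
        push_cast
        rfl
      rw [hsum, ← Finset.sum_div, ← hc]
      rw [show 2 * (j + 1) + 1 = (2 * j + 2) + 1 by ring, pow_succ]
      ring
end
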